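/- Let A be a finite-dimensional lozenge algebra with Laplacian Δ = dd* + d*d, and let 𝓗 = Ker(Δ) denote the harmonic elements. Then 𝓗⁰ := 𝓗 ∩ A⁰ is a unital subalgebra of A⁰, and 𝓗² := 𝓗 ∩ A² is a 𝓗⁰-sub-bimodule of A²: if a ∈ A⁰ and b ∈ A² are both harmonic, then ab and ba are harmonic (in particular ∂*(ab) = a·∂*(b)). Moreover L(a) = ωa and Λ restrict to mutually inverse bijections between 𝓗⁰ and 𝓗². -/

import Mathlib

/-! Positivity of the inner product makes `x` harmonic iff `dx = 0` and `d*x = 0`, so `a ∈ A⁰`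
is harmonic iff `da = 0`. For `u, b ∈ A²` one has `⟨u, b⟩ = τ(u* Λb)`, and Stokes (`τ ∘ d = 0`)
moves `d` in `⟨dc, b⟩` onto `Λb`; this gives the Kähler identities `d*b = i ∂Λb − i ∂̄Λb` and
`∂*b = −i ∂̄Λb` on `A²`. Hence `b ∈ A²` is harmonic iff `Λb` is closed. As `Λ` is
`A⁰`-bilinear, the Leibniz rule for closed `a ∈ A⁰` then gives everything, including
`∂*(ab) = a ∂*b`. -/

/-- A lozenge algebra: a ℤ-graded unital associative ℂ-algebra `A = A⁰ ⊕ A¹ ⊕ A²`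
concentrated in degrees 0,1,2 (with `A¹ = A^{1,0} ⊕ A^{0,1}`), equipped with a degree 1
derivation `d` with `d² = 0`, a central curvature `θ ∈ A²`, a ℂ-antilinear involution
`*`, a trace `τ : A² → ℂ` (extended by `0` to all of `A`), a Kähler element `ω ∈ A²`
with inverse Lefschetz operator `Λ` (extended by `0` on `A⁰ ⊕ A¹`), positive definite
Hermitian forms on each graded piece, and the Yang–Mills condition `d(Λθ) = 0`. -/
structure LozengeAlgebra (A : Type*) [Ring A] [Algebra ℂ A] where
  A0 : Submodule ℂ A
  A10 : Submodule ℂ A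
  A01 : Submodule ℂ A
  A2 : Submodule ℂ A
  p0 : A →ₗ[ℂ] A
  p10 : A →ₗ[ℂ] A
  p01 : A →ₗ[ℂ] A
  p2 : A →ₗ[ℂ] A
  d : A →ₗ[ℂ] A
  Lam : A →ₗ[ℂ] A
  st : A → A
  tau : A →ₗ[ℂ] ℂ
  theta : A
  omega : A
  -- the projections realize the direct sum decomposition A = A⁰ ⊕ A^{1,0} ⊕ A^{0,1} ⊕ A²
  p0_mem : ∀ x : A, p0 x ∈ A0
  p10_mem : ∀ x : A, p10 x ∈ A10
  p01_mem : ∀ x : A, p01 x ∈ A01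
  p2_mem : ∀ x : A, p2 x ∈ A2
  decomp : ∀ x : A, p0 x + p10 x + p01 x + p2 x = x
  proj_eq : ∀ x0 ∈ A0, ∀ x10 ∈ A10, ∀ x01 ∈ A01, ∀ x2 ∈ A2,
    p0 (x0 + x10 + x01 + x2) = x0 ∧ p10 (x0 + x10 + x01 + x2) = x10 ∧
    p01 (x0 + x10 + x01 + x2) = x01 ∧ p2 (x0 + x10 + x01 + x2) = x2
  -- multiplicative grading
  one_mem : (1 : A) ∈ A0
  mul00 : ∀ a ∈ A0, ∀ b ∈ A0, a * b ∈ A0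
  mul0_10 : ∀ a ∈ A0, ∀ b ∈ A10, a * b ∈ A10 ∧ b * a ∈ A10
  mul0_01 : ∀ a ∈ A0, ∀ b ∈ A01, a * b ∈ A01 ∧ b * a ∈ A01
  mul0_2 : ∀ a ∈ A0, ∀ b ∈ A2, a * b ∈ A2 ∧ b * a ∈ A2
  mul10_10 : ∀ a ∈ A10, ∀ b ∈ A10, a * b = 0
  mul10_01 : ∀ a ∈ A10, ∀ b ∈ A01, a * b ∈ A2 ∧ b * a ∈ A2
  mul01_01 : ∀ a ∈ A01, ∀ b ∈ A01, a * b ∈ A2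
  mul1_2 : ∀ a : A, (a ∈ A10 ∨ a ∈ A01) → ∀ b ∈ A2, a * b = 0 ∧ b * a = 0
  mul2_2 : ∀ a ∈ A2, ∀ b ∈ A2, a * b = 0
  -- the differential
  d0_mem : ∀ x ∈ A0, p10 (d x) + p01 (d x) = d x
  d10_mem : ∀ x ∈ A10, d x ∈ A2
  d01_mem : ∀ x ∈ A01, d x ∈ A2
  d2_zero : ∀ x ∈ A2, d x = 0
  d_sq : ∀ x : A, d (d x) = 0
  leibniz0 : ∀ a ∈ A0, ∀ b : A, d (a * b) = d a * b + a * d b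
  leibniz1 : ∀ a : A, (a ∈ A10 ∨ a ∈ A01) → ∀ b : A, d (a * b) = d a * b - a * d b
  leibniz2 : ∀ a ∈ A2, ∀ b : A, d (a * b) = d a * b + a * d b
  -- the curvature
  theta_mem : theta ∈ A2
  theta_central : ∀ a : A, theta * a = a * theta
  -- the ℂ-antilinear involution
  st_add : ∀ x y : A, st (x + y) = st x + st y
  st_smul : ∀ (c : ℂ) (x : A), st (c • x) = (starRingEnd ℂ c) • st x
  st_invol : ∀ x : A, st (st x) = x
  st_one : st 1 = 1
  st_mem0 : ∀ x ∈ A0, st x ∈ A0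
  st_mem10 : ∀ x ∈ A10, st x ∈ A01
  st_mem01 : ∀ x ∈ A01, st x ∈ A10
  st_mem2 : ∀ x ∈ A2, st x ∈ A2
  st_mul0 : ∀ a ∈ A0, ∀ b : A, st (a * b) = st b * st a ∧ st (b * a) = st a * st b
  st_mul1 : ∀ a b : A, (a ∈ A10 ∨ a ∈ A01) → (b ∈ A10 ∨ b ∈ A01) →
    st (a * b) = -(st b * st a)
  st_d : ∀ x : A, st (d x) = d (st x)
  st_theta : st theta = -theta
  -- the trace
  tau_zero0 : ∀ x ∈ A0, tau x = 0
  tau_zero10 : ∀ x ∈ A10, tau x = 0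
  tau_zero01 : ∀ x ∈ A01, tau x = 0
  tau_comm0 : ∀ a ∈ A0, ∀ b : A, tau (a * b) = tau (b * a)
  tau_anticomm1 : ∀ a b : A, (a ∈ A10 ∨ a ∈ A01) → (b ∈ A10 ∨ b ∈ A01) →
    tau (a * b) = -tau (b * a)
  tau_d : ∀ x : A, tau (d x) = 0
  tau_star : ∀ x ∈ A2, tau (st x) = starRingEnd ℂ (tau x)
  -- the Kähler element and the Lefschetz operators
  omega_mem : omega ∈ A2
  omega_st : st omega = omega
  omega_comm : ∀ a ∈ A0, omega * a = a * omega
  Lam_mem : ∀ x : A, Lam x ∈ A0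
  Lam_zero0 : ∀ x ∈ A0, Lam x = 0
  Lam_zero10 : ∀ x ∈ A10, Lam x = 0
  Lam_zero01 : ∀ x ∈ A01, Lam x = 0
  Lam_left_inv : ∀ a ∈ A0, Lam (omega * a) = a
  Lam_right_inv : ∀ b ∈ A2, omega * Lam b = b
  -- positive definiteness of the four Hermitian forms
  pos0 : ∀ a ∈ A0, a ≠ 0 →
    0 < (tau (omega * (st a * a))).re ∧ (tau (omega * (st a * a))).im = 0
  pos10 : ∀ a ∈ A10, a ≠ 0 →
    0 < (-Complex.I * tau (st a * a)).re ∧ (-Complex.I * tau (st a * a)).im = 0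
  pos01 : ∀ a ∈ A01, a ≠ 0 →
    0 < (Complex.I * tau (st a * a)).re ∧ (Complex.I * tau (st a * a)).im = 0
  pos2 : ∀ a ∈ A2, a ≠ 0 →
    0 < (tau (omega * (st (Lam a) * Lam a))).re ∧
      (tau (omega * (st (Lam a) * Lam a))).im = 0
  -- the Yang–Mills condition
  ym : d (Lam theta) = 0

namespace LozengeAlgebra

variable {A : Type*} [Ring A] [Algebra ℂ A] (Lz : LozengeAlgebra A)

/-- The operator `∂` (the `A^{1,0}`-component of `d` on `A⁰`, and `d` on `A^{0,1}`). -/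
def del (x : A) : A := Lz.p10 (Lz.d (Lz.p0 x)) + Lz.d (Lz.p01 x)

/-- The operator `∂̄` (the `A^{0,1}`-component of `d` on `A⁰`, and `d` on `A^{1,0}`). -/
def delbar (x : A) : A := Lz.p01 (Lz.d (Lz.p0 x)) + Lz.d (Lz.p10 x)

/-- The total inner product on `A = A⁰ ⊕ A^{1,0} ⊕ A^{0,1} ⊕ A²`, the orthogonal sum of
the Hermitian forms `τ(ω a* b)` on `A⁰`, `−iτ(a* b)` on `A^{1,0}`, `iτ(a* b)` on
`A^{0,1}`, and `τ(ω Λ(a)* Λ(b))` on `A²`. -/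
noncomputable def innerL (u v : A) : ℂ :=
  Lz.tau (Lz.omega * (Lz.st (Lz.p0 u) * Lz.p0 v))
    + (-Complex.I) * Lz.tau (Lz.st (Lz.p10 u) * Lz.p10 v)
    + Complex.I * Lz.tau (Lz.st (Lz.p01 u) * Lz.p01 v)
    + Lz.tau (Lz.omega * (Lz.st (Lz.Lam (Lz.p2 u)) * Lz.Lam (Lz.p2 v)))

lemma st_zero : Lz.st 0 = 0 := by
  simpa using Lz.st_smul 0 0

lemma projs_eq_of_eq_add {x x0 x10 x01 x2 : A} (h : x = x0 + x10 + x01 + x2)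
    (h0 : x0 ∈ Lz.A0) (h10 : x10 ∈ Lz.A10) (h01 : x01 ∈ Lz.A01) (h2 : x2 ∈ Lz.A2) :
    Lz.p0 x = x0 ∧ Lz.p10 x = x10 ∧ Lz.p01 x = x01 ∧ Lz.p2 x = x2 :=
  h ▸ Lz.proj_eq x0 h0 x10 h10 x01 h01 x2 h2

lemma projs_of_mem_A0 {x : A} (h : x ∈ Lz.A0) :
    Lz.p0 x = x ∧ Lz.p10 x = 0 ∧ Lz.p01 x = 0 ∧ Lz.p2 x = 0 :=
  Lz.projs_eq_of_eq_add (by simp) h (zero_mem _) (zero_mem _) (zero_mem _)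

lemma projs_of_mem_A1 {y10 y01 : A} (h10 : y10 ∈ Lz.A10) (h01 : y01 ∈ Lz.A01) :
    Lz.p0 (y10 + y01) = 0 ∧ Lz.p10 (y10 + y01) = y10 ∧ Lz.p01 (y10 + y01) = y01 ∧
      Lz.p2 (y10 + y01) = 0 :=
  Lz.projs_eq_of_eq_add (by simp) (zero_mem _) h10 h01 (zero_mem _)

lemma projs_of_mem_A2 {x : A} (h : x ∈ Lz.A2) :
    Lz.p0 x = 0 ∧ Lz.p10 x = 0 ∧ Lz.p01 x = 0 ∧ Lz.p2 x = x :=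
  Lz.projs_eq_of_eq_add (by simp) (zero_mem _) (zero_mem _) (zero_mem _) h

lemma projs_d (x : A) :
    Lz.p0 (Lz.d x) = 0 ∧ Lz.p2 (Lz.d x) = Lz.d (Lz.p10 x) + Lz.d (Lz.p01 x) := by
  have hd : Lz.d x = 0 + Lz.p10 (Lz.d (Lz.p0 x)) + Lz.p01 (Lz.d (Lz.p0 x))
      + (Lz.d (Lz.p10 x) + Lz.d (Lz.p01 x)) := by
    conv_lhs => rw [← Lz.decomp x, map_add, map_add, map_add, Lz.d2_zero _ (Lz.p2_mem x),
      ← Lz.d0_mem _ (Lz.p0_mem x)]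
    abel
  obtain ⟨h0, -, -, h2⟩ := Lz.projs_eq_of_eq_add hd (zero_mem _) (Lz.p10_mem _) (Lz.p01_mem _)
    (add_mem (Lz.d10_mem _ (Lz.p10_mem x)) (Lz.d01_mem _ (Lz.p01_mem x)))
  exact ⟨h0, h2⟩

lemma p01_mul_of_mem_A0 {a : A} (ha : a ∈ Lz.A0) (x : A) : Lz.p01 (a * x) = a * Lz.p01 x := by
  have h : a * x = a * Lz.p0 x + a * Lz.p10 x + a * Lz.p01 x + a * Lz.p2 x := by
    conv_lhs => rw [← Lz.decomp x]
    simp only [mul_add]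
  exact (Lz.projs_eq_of_eq_add h (Lz.mul00 a ha _ (Lz.p0_mem x))
    (Lz.mul0_10 a ha _ (Lz.p10_mem x)).1 (Lz.mul0_01 a ha _ (Lz.p01_mem x)).1
    (Lz.mul0_2 a ha _ (Lz.p2_mem x)).1).2.2.1

lemma mul_eq_zero_of_mem_A01 {x y : A} (hx : x ∈ Lz.A01) (hy : y ∈ Lz.A01) : x * y = 0 := by
  have h : Lz.st (x * y) = Lz.st 0 := by
    rw [Lz.st_mul1 x y (Or.inr hx) (Or.inr hy),
      Lz.mul10_10 _ (Lz.st_mem01 y hy) _ (Lz.st_mem01 x hx), neg_zero, Lz.st_zero]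
  simpa only [Lz.st_invol] using congrArg Lz.st h

lemma d_one : Lz.d 1 = 0 := by
  have h := Lz.leibniz0 1 Lz.one_mem 1
  rw [mul_one, one_mul, mul_one] at h
  exact left_eq_add.mp h

lemma Lam_mul_of_mem_A0 {a b : A} (ha : a ∈ Lz.A0) (hb : b ∈ Lz.A2) :
    Lz.Lam (a * b) = a * Lz.Lam b := by
  have h : a * b = Lz.omega * (a * Lz.Lam b) := by
    conv_lhs => rw [← Lz.Lam_right_inv b hb]
    rw [← mul_assoc, ← Lz.omega_comm a ha, mul_assoc]
  rw [h, Lz.Lam_left_inv _ (Lz.mul00 a ha _ (Lz.Lam_mem b))]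

lemma Lam_mul_of_mem_A0_right {a b : A} (ha : a ∈ Lz.A0) (hb : b ∈ Lz.A2) :
    Lz.Lam (b * a) = Lz.Lam b * a := by
  have h : b * a = Lz.omega * (Lz.Lam b * a) := by
    conv_lhs => rw [← Lz.Lam_right_inv b hb]
    rw [mul_assoc]
  rw [h, Lz.Lam_left_inv _ (Lz.mul00 _ (Lz.Lam_mem b) a ha)]

lemma omega_mul_st_Lam_mul {y : A} (hy : y ∈ Lz.A2) (w : A) :
    Lz.omega * (Lz.st (Lz.Lam y) * w) = Lz.st y * w := by
  have hΛ : Lz.Lam y ∈ Lz.A0 := Lz.Lam_mem y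
  have h : Lz.st (Lz.Lam y) * Lz.omega = Lz.st y := by
    conv_rhs => rw [← Lz.Lam_right_inv y hy, (Lz.st_mul0 _ hΛ Lz.omega).2, Lz.omega_st]
  rw [← mul_assoc, Lz.omega_comm _ (Lz.st_mem0 _ hΛ), h]

lemma tau_d_mul {z : A} (hz : z ∈ Lz.A10 ∨ z ∈ Lz.A01) (u : A) :
    Lz.tau (Lz.d z * u) = Lz.tau (z * Lz.d u) := by
  rw [← sub_add_cancel (Lz.d z * u) (z * Lz.d u), ← Lz.leibniz1 z hz u, map_add, Lz.tau_d,
    zero_add]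

lemma innerL_zero_left (v : A) : Lz.innerL 0 v = 0 := by
  simp [innerL, Lz.st_zero]

lemma innerL_zero_right (u : A) : Lz.innerL u 0 = 0 := by
  simp [innerL]

lemma innerL_sub_right (u v w : A) :
    Lz.innerL u (v - w) = Lz.innerL u v - Lz.innerL u w := by
  simp only [innerL, map_sub, mul_sub]
  ring

lemma eq_zero_of_innerL_self_eq_zero {x : A} (h : Lz.innerL x x = 0) : x = 0 := by
  have key : ∀ (t : ℂ) (y : A), (y ≠ 0 → 0 < t.re ∧ t.im = 0) → (y = 0 → t = 0) →
      0 ≤ t.re ∧ (t.re ≤ 0 → y = 0) := by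
    intro t y hpos hzero
    rcases eq_or_ne y 0 with hy | hy
    · simp [hzero hy, hy]
    · exact ⟨(hpos hy).1.le, fun hre => absurd (hpos hy).1 hre.not_gt⟩
  have k0 := key _ (Lz.p0 x) (Lz.pos0 _ (Lz.p0_mem x)) (fun he => by simp [he, Lz.st_zero])
  have k10 := key _ (Lz.p10 x) (Lz.pos10 _ (Lz.p10_mem x)) (fun he => by simp [he])
  have k01 := key _ (Lz.p01 x) (Lz.pos01 _ (Lz.p01_mem x)) (fun he => by simp [he])
  have k2 := key _ (Lz.p2 x) (Lz.pos2 _ (Lz.p2_mem x)) (fun he => by simp [he, Lz.st_zero])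
  have hre := congrArg Complex.re h
  simp only [innerL, Complex.add_re, Complex.zero_re] at hre
  rw [← Lz.decomp x, k0.2 (by linarith [k10.1, k01.1, k2.1]),
    k10.2 (by linarith [k0.1, k01.1, k2.1]), k01.2 (by linarith [k0.1, k10.1, k2.1]),
    k2.2 (by linarith [k0.1, k10.1, k01.1])]
  simp

lemma ext_innerL {y z : A} (h : ∀ u, Lz.innerL u y = Lz.innerL u z) : y = z :=
  sub_eq_zero.mp <| Lz.eq_zero_of_innerL_self_eq_zero <| by rw [innerL_sub_right, h, sub_self]

lemma innerL_of_mem_A1_right {y10 y01 : A} (h10 : y10 ∈ Lz.A10) (h01 : y01 ∈ Lz.A01) (u : A) :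
    Lz.innerL u (y10 + y01)
      = -Complex.I * Lz.tau (Lz.st (Lz.p10 u) * y10)
        + Complex.I * Lz.tau (Lz.st (Lz.p01 u) * y01) := by
  obtain ⟨e0, e10, e01, e2⟩ := Lz.projs_of_mem_A1 h10 h01
  simp [innerL, e0, e10, e01, e2]

lemma innerL_of_mem_A2_right {b : A} (hb : b ∈ Lz.A2) (u : A) :
    Lz.innerL u b = Lz.tau (Lz.st (Lz.p2 u) * Lz.Lam b) := by
  obtain ⟨e0, e10, e01, e2⟩ := Lz.projs_of_mem_A2 hb
  simp [innerL, e0, e10, e01, e2, Lz.omega_mul_st_Lam_mul (Lz.p2_mem u)]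

lemma innerL_d_of_mem_A2 (c : A) {b : A} (hb : b ∈ Lz.A2) :
    Lz.innerL (Lz.d c) b
      = Lz.tau (Lz.st (Lz.p10 c) * Lz.p10 (Lz.d (Lz.Lam b)))
        + Lz.tau (Lz.st (Lz.p01 c) * Lz.p01 (Lz.d (Lz.Lam b))) := by
  have h10 : Lz.st (Lz.p10 c) ∈ Lz.A01 := Lz.st_mem10 _ (Lz.p10_mem c)
  have h01 : Lz.st (Lz.p01 c) ∈ Lz.A10 := Lz.st_mem01 _ (Lz.p01_mem c)
  rw [Lz.innerL_of_mem_A2_right hb, (Lz.projs_d c).2, Lz.st_add, Lz.st_d, Lz.st_d, add_mul,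
    map_add, Lz.tau_d_mul (Or.inr h10), Lz.tau_d_mul (Or.inl h01)]
  conv_lhs => rw [← Lz.d0_mem _ (Lz.Lam_mem b)]
  rw [mul_add, mul_add, Lz.mul_eq_zero_of_mem_A01 h10 (Lz.p01_mem _), Lz.mul10_10 _ h01 _ (Lz.p10_mem _),
    add_zero, zero_add]

lemma innerL_del_of_mem_A2 (u : A) {b : A} (hb : b ∈ Lz.A2) :
    Lz.innerL (Lz.del u) b = Lz.innerL (Lz.d (Lz.p01 u)) b := by
  have hd : Lz.d (Lz.p01 u) ∈ Lz.A2 := Lz.d01_mem _ (Lz.p01_mem u)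
  have hdel : Lz.del u = 0 + Lz.p10 (Lz.d (Lz.p0 u)) + 0 + Lz.d (Lz.p01 u) := by
    simp [del]
  rw [Lz.innerL_of_mem_A2_right hb, Lz.innerL_of_mem_A2_right hb,
    (Lz.projs_eq_of_eq_add hdel (zero_mem _) (Lz.p10_mem _) (zero_mem _) hd).2.2.2,
    (Lz.projs_of_mem_A2 hd).2.2.2]

def IsAdjoint (T S : A → A) : Prop :=
  ∀ u v, Lz.innerL (T u) v = Lz.innerL u (S v)

variable {Lz} {T S : A → A}

lemma IsAdjoint.apply_eq (hS : Lz.IsAdjoint T S) {b y : A}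
    (h : ∀ u, Lz.innerL (T u) b = Lz.innerL u y) : S b = y :=
  Lz.ext_innerL fun u => (hS u b).symm.trans (h u)

lemma IsAdjoint.apply_eq_zero_of_map_apply_eq_zero (hS : Lz.IsAdjoint T S) {y : A}
    (h : T (S y) = 0) : S y = 0 :=
  Lz.eq_zero_of_innerL_self_eq_zero <| by rw [← hS, h, innerL_zero_left]

lemma IsAdjoint.map_eq_zero_of_apply_map_eq_zero (hS : Lz.IsAdjoint T S) {y : A}
    (h : S (T y) = 0) : T y = 0 :=
  Lz.eq_zero_of_innerL_self_eq_zero <| by rw [hS, h, innerL_zero_right]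

lemma adjoint_d_of_mem_A0 (hS : Lz.IsAdjoint Lz.d S) {a : A} (ha : a ∈ Lz.A0) : S a = 0 :=
  hS.apply_eq fun u => by
    obtain ⟨e0, e10, e01, e2⟩ := Lz.projs_of_mem_A0 ha
    simp [innerL, e0, e10, e01, e2, (Lz.projs_d u).1, Lz.st_zero]

lemma adjoint_d_of_mem_A2 (hS : Lz.IsAdjoint Lz.d S) {b : A} (hb : b ∈ Lz.A2) :
    S b = Complex.I • Lz.p10 (Lz.d (Lz.Lam b)) + (-Complex.I) • Lz.p01 (Lz.d (Lz.Lam b)) :=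
  hS.apply_eq fun u => by
    rw [Lz.innerL_d_of_mem_A2 u hb, Lz.innerL_of_mem_A1_right (Submodule.smul_mem _ _
      (Lz.p10_mem _)) (Submodule.smul_mem _ _ (Lz.p01_mem _))]
    simp only [mul_smul_comm, map_smul, smul_eq_mul, ← mul_assoc, neg_mul, mul_neg,
      Complex.I_mul_I, neg_neg, one_mul]

lemma adjoint_del_of_mem_A2 (hS : Lz.IsAdjoint Lz.del S) {b : A} (hb : b ∈ Lz.A2) :
    S b = (-Complex.I) • Lz.p01 (Lz.d (Lz.Lam b)) :=
  hS.apply_eq fun u => by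
    obtain ⟨-, h10, h01, -⟩ := Lz.projs_of_mem_A1 (zero_mem _) (Lz.p01_mem u)
    rw [zero_add] at h10 h01
    rw [Lz.innerL_del_of_mem_A2 u hb, Lz.innerL_d_of_mem_A2 _ hb, h10, h01, ← zero_add
      ((-Complex.I) • _), Lz.innerL_of_mem_A1_right (zero_mem _) (Submodule.smul_mem _ _
      (Lz.p01_mem _))]
    simp only [mul_smul_comm, map_smul, smul_eq_mul, Lz.st_zero, zero_mul, map_zero,
      mul_zero, zero_add, ← mul_assoc, mul_neg, Complex.I_mul_I, neg_neg, one_mul]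

lemma adjoint_d_eq_zero_iff_of_mem_A2 (hS : Lz.IsAdjoint Lz.d S) {b : A} (hb : b ∈ Lz.A2) :
    S b = 0 ↔ Lz.d (Lz.Lam b) = 0 := by
  rw [adjoint_d_of_mem_A2 hS hb]
  refine ⟨fun h => ?_, fun h => by simp [h]⟩
  obtain ⟨-, h10, h01, -⟩ := Lz.projs_of_mem_A1
    (Submodule.smul_mem _ Complex.I (Lz.p10_mem (Lz.d (Lz.Lam b))))
    (Submodule.smul_mem _ (-Complex.I) (Lz.p01_mem (Lz.d (Lz.Lam b))))
  rw [h, map_zero, eq_comm, smul_eq_zero] at h10 h01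
  rw [← Lz.d0_mem _ (Lz.Lam_mem b), h10.resolve_left Complex.I_ne_zero,
    h01.resolve_left (neg_ne_zero.mpr Complex.I_ne_zero), add_zero]

lemma laplacian_eq_zero_iff (hS : Lz.IsAdjoint Lz.d S) (x : A) :
    Lz.d (S x) + S (Lz.d x) = 0 ↔ Lz.d x = 0 ∧ S x = 0 := by
  refine ⟨fun h => ?_, fun ⟨h1, h2⟩ => ?_⟩
  · have hdx : S (Lz.d x) = -Lz.d (S x) := eq_neg_of_add_eq_zero_right h
    have hdx : Lz.d x = 0 := hS.map_eq_zero_of_apply_map_eq_zero <|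
      hS.apply_eq_zero_of_map_apply_eq_zero (by rw [hdx, map_neg, Lz.d_sq, neg_zero])
    refine ⟨hdx, hS.apply_eq_zero_of_map_apply_eq_zero ?_⟩
    rwa [hdx, adjoint_d_of_mem_A0 hS (zero_mem _), add_zero] at h
  · rw [h1, h2, map_zero, adjoint_d_of_mem_A0 hS (zero_mem _), add_zero]

lemma laplacian_eq_zero_iff_of_mem_A0 (hS : Lz.IsAdjoint Lz.d S) {a : A} (ha : a ∈ Lz.A0) :
    Lz.d (S a) + S (Lz.d a) = 0 ↔ Lz.d a = 0 := by
  rw [laplacian_eq_zero_iff hS, and_iff_left (adjoint_d_of_mem_A0 hS ha)]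

lemma laplacian_eq_zero_iff_of_mem_A2 (hS : Lz.IsAdjoint Lz.d S) {b : A} (hb : b ∈ Lz.A2) :
    Lz.d (S b) + S (Lz.d b) = 0 ↔ Lz.d (Lz.Lam b) = 0 := by
  rw [laplacian_eq_zero_iff hS, and_iff_right (Lz.d2_zero b hb),
    adjoint_d_eq_zero_iff_of_mem_A2 hS hb]

end LozengeAlgebra

open LozengeAlgebra in
theorem lozenge_harmonic_part_general
    (A : Type*) [Ring A] [Algebra ℂ A]
    (Lz : LozengeAlgebra A)
    (dS delS : A → A)
    (hdS : ∀ u v : A, Lz.innerL (Lz.d u) v = Lz.innerL u (dS v))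
    (hdelS : ∀ u v : A, Lz.innerL (Lz.del u) v = Lz.innerL u (delS v)) :
    -- 𝓗⁰ is a unital subalgebra of A⁰
    (Lz.d (dS 1) + dS (Lz.d 1) = 0) ∧
    (∀ a ∈ Lz.A0, ∀ b ∈ Lz.A0,
      Lz.d (dS a) + dS (Lz.d a) = 0 → Lz.d (dS b) + dS (Lz.d b) = 0 →
      Lz.d (dS (a * b)) + dS (Lz.d (a * b)) = 0) ∧
    -- 𝓗² is an 𝓗⁰-sub-bimodule of A², and ∂*(ab) = a·∂*(b)
    (∀ a ∈ Lz.A0, ∀ b ∈ Lz.A2,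
      Lz.d (dS a) + dS (Lz.d a) = 0 → Lz.d (dS b) + dS (Lz.d b) = 0 →
      (Lz.d (dS (a * b)) + dS (Lz.d (a * b)) = 0) ∧
      (Lz.d (dS (b * a)) + dS (Lz.d (b * a)) = 0) ∧
      delS (a * b) = a * delS b) ∧
    -- L and Λ restrict to mutually inverse bijections between 𝓗⁰ and 𝓗²
    (∀ a ∈ Lz.A0, Lz.d (dS a) + dS (Lz.d a) = 0 →
      (Lz.d (dS (Lz.omega * a)) + dS (Lz.d (Lz.omega * a)) = 0) ∧
      Lz.Lam (Lz.omega * a) = a) ∧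
    (∀ b ∈ Lz.A2, Lz.d (dS b) + dS (Lz.d b) = 0 →
      (Lz.d (dS (Lz.Lam b)) + dS (Lz.d (Lz.Lam b)) = 0) ∧
      Lz.omega * Lz.Lam b = b) := by
  have harm0 := fun {a} => laplacian_eq_zero_iff_of_mem_A0 (Lz := Lz) hdS (a := a)
  have harm2 := fun {b} => laplacian_eq_zero_iff_of_mem_A2 (Lz := Lz) hdS (b := b)
  refine ⟨(harm0 Lz.one_mem).2 Lz.d_one, fun a ha b hb hha hhb => ?_,
    fun a ha b hb hha hhb => ?_, fun a ha hha => ?_, fun b hb hhb => ?_⟩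
  · rw [harm0 ha] at hha
    rw [harm0 hb] at hhb
    rw [harm0 (Lz.mul00 a ha b hb), Lz.leibniz0 a ha, hha, hhb, zero_mul, mul_zero, add_zero]
  · rw [harm0 ha] at hha
    rw [harm2 hb] at hhb
    have hab := Lz.mul0_2 a ha b hb
    refine ⟨?_, ?_, ?_⟩
    · rw [harm2 hab.1, Lz.Lam_mul_of_mem_A0 ha hb, Lz.leibniz0 a ha, hha, hhb, zero_mul,
        mul_zero, add_zero]
    · rw [harm2 hab.2, Lz.Lam_mul_of_mem_A0_right ha hb, Lz.leibniz0 _ (Lz.Lam_mem b), hha,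
        hhb, zero_mul, mul_zero, add_zero]
    · rw [adjoint_del_of_mem_A2 hdelS hab.1, adjoint_del_of_mem_A2 hdelS hb,
        Lz.Lam_mul_of_mem_A0 ha hb, Lz.leibniz0 a ha, hha, zero_mul, zero_add,
        Lz.p01_mul_of_mem_A0 ha, mul_smul_comm]
  · rw [harm0 ha] at hha
    refine ⟨?_, Lz.Lam_left_inv a ha⟩
    rw [harm2 (Lz.mul0_2 a ha _ Lz.omega_mem).2, Lz.Lam_left_inv a ha, hha]
  · rw [harm2 hb] at hhb
    exact ⟨(harm0 (Lz.Lam_mem b)).2 hhb, Lz.Lam_right_inv b hb⟩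

open LozengeAlgebra in
/-- in a finite-dimensional lozenge algebra with Laplacian `Δ = dd* + d*d`
and harmonic elements `𝓗 = Ker Δ`, the space `𝓗⁰ = 𝓗 ∩ A⁰` is a unital subalgebra of
`A⁰`, and `𝓗² = 𝓗 ∩ A²` is an `𝓗⁰`-sub-bimodule: if `a ∈ A⁰` and `b ∈ A²` are harmonic
then so are `ab` and `ba`, and `∂*(ab) = a·∂*(b)`.  Moreover `L(a) = ωa` and `Λ`
restrict to mutually inverse bijections between `𝓗⁰` and `𝓗²`. -/
theorem lozenge_harmonic_part
    (A : Type*) [Ring A] [Algebra ℂ A] [FiniteDimensional ℂ A]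
    (Lz : LozengeAlgebra A)
    (dS delS : A → A)
    (hdS : ∀ u v : A, Lz.innerL (Lz.d u) v = Lz.innerL u (dS v))
    (hdelS : ∀ u v : A, Lz.innerL (Lz.del u) v = Lz.innerL u (delS v)) :
    -- 𝓗⁰ is a unital subalgebra of A⁰
    (Lz.d (dS 1) + dS (Lz.d 1) = 0) ∧
    (∀ a ∈ Lz.A0, ∀ b ∈ Lz.A0,
      Lz.d (dS a) + dS (Lz.d a) = 0 → Lz.d (dS b) + dS (Lz.d b) = 0 →
      Lz.d (dS (a * b)) + dS (Lz.d (a * b)) = 0) ∧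
    -- 𝓗² is an 𝓗⁰-sub-bimodule of A², and ∂*(ab) = a·∂*(b)
    (∀ a ∈ Lz.A0, ∀ b ∈ Lz.A2,
      Lz.d (dS a) + dS (Lz.d a) = 0 → Lz.d (dS b) + dS (Lz.d b) = 0 →
      (Lz.d (dS (a * b)) + dS (Lz.d (a * b)) = 0) ∧
      (Lz.d (dS (b * a)) + dS (Lz.d (b * a)) = 0) ∧
      delS (a * b) = a * delS b) ∧
    -- L and Λ restrict to mutually inverse bijections between 𝓗⁰ and 𝓗²
    (∀ a ∈ Lz.A0, Lz.d (dS a) + dS (Lz.d a) = 0 →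
      (Lz.d (dS (Lz.omega * a)) + dS (Lz.d (Lz.omega * a)) = 0) ∧
      Lz.Lam (Lz.omega * a) = a) ∧
    (∀ b ∈ Lz.A2, Lz.d (dS b) + dS (Lz.d b) = 0 →
      (Lz.d (dS (Lz.Lam b)) + dS (Lz.d (Lz.Lam b)) = 0) ∧
      Lz.omega * Lz.Lam b = b) :=
  lozenge_harmonic_part_general A Lz dS delS hdS hdelS
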